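/- arXiv:2309.06785 — 2 statements merged into one kernel-verified Lean document; each statement's English description precedes it below -/
import Mathlib

section
/- Every co-minimal subgroup of a Hausdorff topological group G is a key subgroup of G. -/
open Topology

/-- Subspace topology induced on a subgroup `H` by a topology `t` on `G`. -/
def subTop {G : Type*} [Group G] (t : TopologicalSpace G) (H : Subgroup G) :
    TopologicalSpace H :=
  t.induced ((↑) : H → G)

/-- Quotient topology on the coset space `G ⧸ H` induced by a topology `t` on `G`. -/
def quotTop {G : Type*} [Group G] (t : TopologicalSpace G) (H : Subgroup G) :
    TopologicalSpace (G ⧸ H) :=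
  t.coinduced (QuotientGroup.mk : G → G ⧸ H)

/-- `H` is a key subgroup of `(G, γ)`: every coarser Hausdorff group topology `γ₁`
(`γ ≤ γ₁` in Mathlib's order means `γ₁` is coarser than `γ`) inducing the original
subspace topology on `H` coincides with `γ`. -/
def IsKey {G : Type*} [Group G] (γ : TopologicalSpace G) (H : Subgroup G) : Prop :=
  ∀ γ₁ : TopologicalSpace G, γ ≤ γ₁ → @IsTopologicalGroup G γ₁ _ → @T2Space G γ₁ →
    subTop γ₁ H = subTop γ H → γ₁ = γ

/-- `H` is a co-key subgroup of `(G, γ)`: every coarser Hausdorff group topology `γ₁`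
inducing the original quotient topology on `G ⧸ H` coincides with `γ`. -/
def IsCoKey {G : Type*} [Group G] (γ : TopologicalSpace G) (H : Subgroup G) : Prop :=
  ∀ γ₁ : TopologicalSpace G, γ ≤ γ₁ → @IsTopologicalGroup G γ₁ _ → @T2Space G γ₁ →
    quotTop γ₁ H = quotTop γ H → γ₁ = γ

/-- `H` is relatively minimal in `(G, γ)`: every coarser Hausdorff group topology on `G`
induces the original subspace topology on `H`. -/
def IsRelMin {G : Type*} [Group G] (γ : TopologicalSpace G) (H : Subgroup G) : Prop :=
  ∀ γ₁ : TopologicalSpace G, γ ≤ γ₁ → @IsTopologicalGroup G γ₁ _ → @T2Space G γ₁ →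
    subTop γ₁ H = subTop γ H

/-- `H` is co-minimal in `(G, γ)`: every coarser Hausdorff group topology on `G`
induces the original quotient topology on the coset space `G ⧸ H`. -/
def IsCoMin {G : Type*} [Group G] (γ : TopologicalSpace G) (H : Subgroup G) : Prop :=
  ∀ γ₁ : TopologicalSpace G, γ ≤ γ₁ → @IsTopologicalGroup G γ₁ _ → @T2Space G γ₁ →
    quotTop γ₁ H = quotTop γ H

/-- `(X, γ)` is a minimal topological group: no strictly coarser Hausdorff group topology. -/
def IsMinimalGroup {X : Type*} [Group X] (γ : TopologicalSpace X) : Prop :=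
  ∀ γ₁ : TopologicalSpace X, γ ≤ γ₁ → @IsTopologicalGroup X γ₁ _ → @T2Space X γ₁ → γ₁ = γ

/-!
Merson's lemma: a group topology is determined by the topologies it induces on a subgroup `H`
and on the coset space `G ⧸ H`, among comparable group topologies. Given a coarser `γ₁` with the
same traces on `H` and on `G ⧸ H`, and a `γ`-neighbourhood `U ⊇ V * V` of `1`, pick a
`γ₁`-neighbourhood `W₁` with `W₁⁻¹ * W₁ ∩ H ⊆ V` and a `γ`-open `A ⊆ V ∩ W₁` around `1`. The
saturation `A * H` is `γ`-open, hence `γ₁`-open by the quotient hypothesis, and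
`A * H ∩ W₁ ⊆ V * V ⊆ U`. A co-minimal subgroup satisfies the quotient hypothesis for every
coarser Hausdorff group topology, so it is key.
-/

theorem exists_nhds_split_inv_mul {G : Type*} [TopologicalSpace G] [Group G]
    [IsTopologicalGroup G] {W : Set G} (hW : W ∈ 𝓝 (1 : G)) :
    ∃ V ∈ 𝓝 (1 : G), ∀ a ∈ V, ∀ x ∈ V, a⁻¹ * x ∈ W := by
  have hcont : Continuous fun p : G × G => p.1⁻¹ * p.2 := continuous_fst.inv.mul continuous_snd
  have htends : Filter.Tendsto (fun p : G × G => p.1⁻¹ * p.2) (𝓝 1 ×ˢ 𝓝 1) (𝓝 1) := by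
    simpa [← nhds_prod_eq] using hcont.tendsto (1, 1)
  obtain ⟨V, hV, hsq⟩ := Filter.mem_prod_self_iff.mp (htends hW)
  exact ⟨V, hV, fun a ha x hx => hsq (Set.mk_mem_prod ha hx)⟩

section Merson

-- `t` is declared after `γ₁` so that instance resolution picks `t` as the ambient topology.
variable {G : Type*} [Group G] {γ₁ : TopologicalSpace G} [t : TopologicalSpace G]
  {H : Subgroup G}

theorem exists_mem_nhds_one_forall_mem_subgroup_of_subTop_eq
    (hsub : subTop γ₁ H = subTop t H) {V : Set G} (hV : V ∈ 𝓝 (1 : G)) :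
    ∃ W ∈ @nhds G γ₁ 1, ∀ h ∈ H, h ∈ W → h ∈ V := by
  have hcomap :
      Filter.comap ((↑) : H → G) (@nhds G γ₁ 1) = Filter.comap ((↑) : H → G) (𝓝 1) := by
    have h : @nhds H (subTop γ₁ H) 1 = @nhds H (subTop t H) 1 := by rw [hsub]
    rwa [subTop, subTop, @nhds_induced G H γ₁, @nhds_induced G H t, OneMemClass.coe_one] at h
  have hVH : ((↑) : H → G) ⁻¹' V ∈ Filter.comap ((↑) : H → G) (@nhds G γ₁ 1) :=
    hcomap ▸ Filter.preimage_mem_comap hV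
  obtain ⟨W, hW, hWV⟩ := Filter.mem_comap.mp hVH
  exact ⟨W, hW, fun h hH hW => hWV (a := ⟨h, hH⟩) hW⟩

theorem isOpen_preimage_image_mk_of_quotTop_eq [SeparatelyContinuousMul G]
    (hquot : quotTop γ₁ H = quotTop t H) {A : Set G} (hA : IsOpen A) :
    IsOpen[γ₁] ((QuotientGroup.mk : G → G ⧸ H) ⁻¹' (QuotientGroup.mk '' A)) := by
  have himage : IsOpen[quotTop t H] ((QuotientGroup.mk : G → G ⧸ H) '' A) :=
    QuotientGroup.isOpenMap_coe A hA
  rw [← hquot] at himage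
  exact isOpen_coinduced.mp himage

variable [IsTopologicalGroup G]

theorem nhds_one_le_of_subTop_eq_of_quotTop_eq (hle : t ≤ γ₁)
    (hg₁ : @IsTopologicalGroup G γ₁ _) (hsub : subTop γ₁ H = subTop t H)
    (hquot : quotTop γ₁ H = quotTop t H) : @nhds G γ₁ 1 ≤ 𝓝 1 := by
  intro U hU
  obtain ⟨V, hV, hVU⟩ := exists_nhds_one_split hU
  obtain ⟨W, hW, hWV⟩ := exists_mem_nhds_one_forall_mem_subgroup_of_subTop_eq hsub hV
  obtain ⟨W₁, hW₁, hW₁W⟩ := @exists_nhds_split_inv_mul G γ₁ _ hg₁ W hW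
  obtain ⟨A, hAVW, hA, hA1⟩ := mem_nhds_iff.mp (Filter.inter_mem hV (nhds_mono hle hW₁))
  have hsat := isOpen_preimage_image_mk_of_quotTop_eq hquot hA
  refine Filter.mem_of_superset
    (Filter.inter_mem (@IsOpen.mem_nhds G γ₁ _ _ hsat ⟨1, hA1, rfl⟩) hW₁) ?_
  rintro x ⟨⟨a, haA, hax⟩, hxW₁⟩
  have haxH : a⁻¹ * x ∈ H := QuotientGroup.eq.mp hax
  have haxV : a⁻¹ * x ∈ V := hWV _ haxH (hW₁W a (hAVW haA).2 x hxW₁)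
  simpa using hVU a (hAVW haA).1 _ haxV

theorem eq_of_subTop_eq_of_quotTop_eq (hle : t ≤ γ₁) (hg₁ : @IsTopologicalGroup G γ₁ _)
    (hsub : subTop γ₁ H = subTop t H) (hquot : quotTop γ₁ H = quotTop t H) : γ₁ = t :=
  IsTopologicalGroup.ext hg₁ ‹_›
    (le_antisymm (nhds_one_le_of_subTop_eq_of_quotTop_eq hle hg₁ hsub hquot) (nhds_mono hle))

end Merson

theorem isKey_of_isCoMin_general {G : Type*} [Group G] (γ : TopologicalSpace G)
    (hγ : @IsTopologicalGroup G γ _)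
    (H : Subgroup G) (h : IsCoMin γ H) :
    IsKey γ H := fun γ₁ hle hg₁ hT2₁ hsub =>
  eq_of_subTop_eq_of_quotTop_eq (t := γ) hle hg₁ hsub (h γ₁ hle hg₁ hT2₁)

/-- Every co-minimal subgroup is a key subgroup. -/
theorem isKey_of_isCoMin {G : Type*} [Group G] (γ : TopologicalSpace G)
    (hγ : @IsTopologicalGroup G γ _) (hT2 : @T2Space G γ)
    (H : Subgroup G) (h : IsCoMin γ H) :
    IsKey γ H :=
  isKey_of_isCoMin_general γ hγ H h
end

section
/- Let H be a central subgroup of a Hausdorff topological group (G, γ). Then H is inj-key in G if and only if H is co-minimal in G. -/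
open Topology

/-- `H` is inj-key in `(G, γ)`: the restriction map on coarser Hausdorff group topologies
is injective. -/
def IsInjKey {G : Type*} [Group G] (γ : TopologicalSpace G) (H : Subgroup G) : Prop :=
  ∀ γ₁ γ₂ : TopologicalSpace G, γ ≤ γ₁ → γ ≤ γ₂ →
    @IsTopologicalGroup G γ₁ _ → @IsTopologicalGroup G γ₂ _ →
    @T2Space G γ₁ → @T2Space G γ₂ →
    subTop γ₁ H = subTop γ₂ H → γ₁ = γ₂

/-!
Co-minimal implies inj-key: if two Hausdorff group topologies `σ₁, σ₂` coarser than `γ` agree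
on `H`, their join `σ₁ ⊓ σ₂` (the meet in Mathlib's order) agrees with each `σᵢ` on `H` and, by
co-minimality, on `G ⧸ H`, so Merson's lemma gives `σ₁ = σ₁ ⊓ σ₂ = σ₂`.

Inj-key implies co-minimal: for `τ` coarser than `γ`, let `D` be the pullback of `γ / H` along
`G → G ⧸ H`. Since `D` is indiscrete on `H`, `τ ⊓ D` has the same trace on `H` as `τ`, so
`τ ⊓ D = τ`; thus `τ` is finer than `D`, i.e. `τ / H` is finer than `γ / H`.
-/

open Pointwise

theorem Subgroup.normal_of_le_center {G : Type*} [Group G] {H : Subgroup G}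
    (hc : H ≤ Subgroup.center G) : H.Normal :=
  ⟨fun h hh g => by simpa [Subgroup.mem_center_iff.mp (hc hh) g] using hh⟩

section Merson

variable {G : Type*} [Group G] {H : Subgroup G} {t s : TopologicalSpace G}

theorem comap_nhds_one_eq_of_subTop_eq (hsub : subTop t H = subTop s H) :
    Filter.comap ((↑) : H → G) (@nhds G t 1) = Filter.comap ((↑) : H → G) (@nhds G s 1) := by
  have h := congrArg (fun τ : TopologicalSpace H => @nhds H τ 1) hsub
  rwa [subTop, subTop, @nhds_induced G H t, @nhds_induced G H s] at h

theorem isOpen_mul_subgroup_of_quotTop_eq (ht : @IsTopologicalGroup G t _)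
    (hquot : quotTop t H = quotTop s H) {O : Set G} (hO : IsOpen[t] O) :
    IsOpen[s] (O * H) := by
  have hO' : IsOpen[quotTop t H] ((QuotientGroup.mk : G → G ⧸ H) '' O) := by
    let _ := t
    exact QuotientGroup.isOpenMap_coe O hO
  rw [hquot, quotTop, isOpen_coinduced, QuotientGroup.preimage_image_mk_eq_mul] at hO'
  exact hO'

/-- Merson's lemma: a group topology is determined, among coarser group topologies, by its
traces on `H` and on `G ⧸ H`. -/
theorem eq_of_le_of_subTop_eq_of_quotTop_eq (ht : @IsTopologicalGroup G t _)
    (hs : @IsTopologicalGroup G s _) (hle : t ≤ s)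
    (hsub : subTop t H = subTop s H) (hquot : quotTop t H = quotTop s H) : t = s := by
  refine ht.ext hs (le_antisymm (nhds_mono hle) fun W hW => ?_)
  obtain ⟨V, hV, -, -, hVW⟩ : ∃ V ∈ @nhds G t 1, IsClosed[t] V ∧ V⁻¹ = V ∧ V * V ⊆ W := by
    let _ := t; exact exists_closed_nhds_one_inv_eq_mul_subset hW
  obtain ⟨U, hU, hUV⟩ : ∃ U ∈ @nhds G s 1, ((↑) : H → G) ⁻¹' U ⊆ ((↑) : H → G) ⁻¹' V := by
    have : ((↑) : H → G) ⁻¹' V ∈ Filter.comap ((↑) : H → G) (@nhds G s 1) :=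
      comap_nhds_one_eq_of_subTop_eq hsub ▸ Filter.preimage_mem_comap hV
    exact Filter.mem_comap.mp this
  obtain ⟨U₁, hU₁, -, hU₁inv, hU₁U⟩ :
      ∃ U₁ ∈ @nhds G s 1, IsClosed[s] U₁ ∧ U₁⁻¹ = U₁ ∧ U₁ * U₁ ⊆ U := by
    let _ := s; exact exists_closed_nhds_one_inv_eq_mul_subset hU
  obtain ⟨O, hOsub, hOo, hO1⟩ : ∃ O ⊆ V ∩ U₁, IsOpen[t] O ∧ (1 : G) ∈ O := by
    let _ := t; exact mem_nhds_iff.mp (Filter.inter_mem hV (nhds_mono hle hU₁))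
  have hOH : O * (H : Set G) ∈ @nhds G s 1 := by
    let _ := s
    exact (isOpen_mul_subgroup_of_quotTop_eq ht hquot hOo).mem_nhds
      ⟨1, hO1, 1, H.one_mem, mul_one 1⟩
  refine Filter.mem_of_superset (Filter.inter_mem hOH hU₁) ?_
  rintro _ ⟨⟨o, ho, h, hh, rfl⟩, hohU₁⟩
  -- `h = o⁻¹ * (o * h) ∈ U₁ * U₁ ⊆ U` and `h ∈ H`, so `h ∈ V`.
  have ho' : o⁻¹ ∈ U₁ := hU₁inv ▸ Set.inv_mem_inv.mpr (hOsub ho).2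
  have hhU : h ∈ U := hU₁U ⟨o⁻¹, ho', o * h, hohU₁, by group⟩
  exact hVW ⟨o, (hOsub ho).1, h, @hUV ⟨h, hh⟩ hhU, rfl⟩

end Merson

section Restriction

variable {G : Type*} [Group G] {H : Subgroup G}

theorem subTop_inf (t s : TopologicalSpace G) :
    subTop (t ⊓ s) H = subTop t H ⊓ subTop s H :=
  induced_inf

theorem subTop_induced_mk_eq_top (q : TopologicalSpace (G ⧸ H)) :
    subTop (q.induced (QuotientGroup.mk : G → G ⧸ H)) H = ⊤ := by
  have hconst : ((QuotientGroup.mk : G → G ⧸ H) ∘ ((↑) : H → G)) = fun _ => ↑(1 : G) :=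
    funext fun h => QuotientGroup.eq.mpr (by simp [h.2])
  rw [subTop, induced_compose, hconst, induced_const]

end Restriction

theorem IsCoMin.isInjKey {G : Type*} [Group G] {γ : TopologicalSpace G} {H : Subgroup G}
    (hco : IsCoMin γ H) : IsInjKey γ H := by
  intro τ₁ τ₂ hγτ₁ hγτ₂ hτ₁ hτ₂ hτ₁T2 hτ₂T2 hsub
  have hγτ : γ ≤ τ₁ ⊓ τ₂ := le_inf hγτ₁ hγτ₂
  have hτ : @IsTopologicalGroup G (τ₁ ⊓ τ₂) _ := topologicalGroup_inf hτ₁ hτ₂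
  have hquot := hco _ hγτ hτ (t2Space_antitone inf_le_left hτ₁T2)
  have hsub₁ : subTop (τ₁ ⊓ τ₂) H = subTop τ₁ H := by rw [subTop_inf, ← hsub, inf_idem]
  calc τ₁ = τ₁ ⊓ τ₂ := (eq_of_le_of_subTop_eq_of_quotTop_eq hτ hτ₁ inf_le_left hsub₁
        (hquot.trans (hco τ₁ hγτ₁ hτ₁ hτ₁T2).symm)).symm
    _ = τ₂ := eq_of_le_of_subTop_eq_of_quotTop_eq hτ hτ₂ inf_le_right (hsub₁.trans hsub)
        (hquot.trans (hco τ₂ hγτ₂ hτ₂ hτ₂T2).symm)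

theorem IsInjKey.isCoMin {G : Type*} [Group G] {γ : TopologicalSpace G} {H : Subgroup G}
    [H.Normal] (hγ : @IsTopologicalGroup G γ _) (hinj : IsInjKey γ H) : IsCoMin γ H := by
  intro τ hγτ hτ hτT2
  set D : TopologicalSpace G := (quotTop γ H).induced QuotientGroup.mk with hD_def
  have hD : @IsTopologicalGroup G D _ := by
    let _ := γ
    let _ := quotTop γ H
    have : IsTopologicalGroup (G ⧸ H) := QuotientGroup.instIsTopologicalGroup H
    exact topologicalGroup_induced (QuotientGroup.mk' H)
  have hγD : γ ≤ D := coinduced_le_iff_le_induced.mp le_rfl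
  have hτD : τ ⊓ D = τ :=
    hinj _ τ (le_inf hγτ hγD) hγτ (topologicalGroup_inf hτ hD) hτ
      (t2Space_antitone inf_le_left hτT2) hτT2
      (by rw [subTop_inf, hD_def, subTop_induced_mk_eq_top, inf_top_eq])
  exact le_antisymm (coinduced_le_iff_le_induced.mpr (inf_eq_left.mp hτD)) (coinduced_mono hγτ)

theorem central_isInjKey_iff_isCoMin_general {G : Type*} [Group G] (γ : TopologicalSpace G)
    (hγ : @IsTopologicalGroup G γ _)
    (H : Subgroup G) (hc : H ≤ Subgroup.center G) :
    IsInjKey γ H ↔ IsCoMin γ H :=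
  have := Subgroup.normal_of_le_center hc
  ⟨IsInjKey.isCoMin hγ, IsCoMin.isInjKey⟩

/-- A central subgroup is inj-key iff it is co-minimal. -/
theorem central_isInjKey_iff_isCoMin {G : Type*} [Group G] (γ : TopologicalSpace G)
    (hγ : @IsTopologicalGroup G γ _) (hT2 : @T2Space G γ)
    (H : Subgroup G) (hc : H ≤ Subgroup.center G) :
    IsInjKey γ H ↔ IsCoMin γ H :=
  central_isInjKey_iff_isCoMin_general γ hγ H hc
end
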